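/- Let α > 0 and let f ∈ B₁(α) with Taylor coefficients a₂, a₃. Then |a₃ − ((α+3)/(2(α+2))) a₂²| ≤ 2/(α+2) − ((α+1)²/(2(α+2))) |a₂|². -/

import Mathlib

/-! The function `q = (f / z) ^ (α - 1) * f'` (`bazilevicFunction`) has positive real part
and `q 0 = 1`, so its Taylor coefficients `c₁ = (α + 1) a₂` and
`c₂ = (α + 2) a₃ + (α ^ 2 + α - 2) a₂ ^ 2 / 2` obey the sharp Carathéodory estimate
`|c₂ - c₁ ^ 2 / 2| ≤ 2 - |c₁| ^ 2 / 2`; since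
`c₂ - c₁ ^ 2 / 2 = (α + 2) (a₃ - (α + 3) / (2 (α + 2)) a₂ ^ 2)`, this is the claim. The
Carathéodory estimate is Schwarz–Pick at the origin, `|g' 0| ≤ 1 - |g 0| ^ 2`, for `g = ω / z`,
where `ω = (q - 1) / (q + 1)` is a Schwarz function. -/

open Complex Metric

/-- The Bazilevič class `B₁(α)`: `f` is analytic on the unit disk with `f 0 = 0`,
`f' 0 = 1`, and `Re[(f z / z)^(α-1) * f' z] > 0` on the disk, where the power is taken
with the analytic branch equal to `1` at `z = 0`.  The branch is encoded via an analytic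
function `h` with `h 0 = 0` and `f z = z * exp (h z)` on the disk (so that
`h = log (f z / z)` and `(f z / z)^(α-1) = exp ((α-1) * h z)`). -/
def BazilevicB1 (α : ℝ) (f h : ℂ → ℂ) : Prop :=
  AnalyticOnNhd ℂ f (ball 0 1) ∧ AnalyticOnNhd ℂ h (ball 0 1) ∧
  f 0 = 0 ∧ deriv f 0 = 1 ∧ h 0 = 0 ∧
  (∀ z ∈ ball (0 : ℂ) 1, f z = z * Complex.exp (h z)) ∧
  (∀ z ∈ ball (0 : ℂ) 1, 0 < (Complex.exp ((α - 1 : ℂ) * h z) * deriv f z).re)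

/-- The first logarithmic coefficient `γ₁`, from `h = log (f z / z) = 2 ∑ γₙ zⁿ`. -/
noncomputable def logCoeff1 (h : ℂ → ℂ) : ℂ := deriv h 0 / 2

/-- The second logarithmic coefficient `γ₂`, from `h = log (f z / z) = 2 ∑ γₙ zⁿ`. -/
noncomputable def logCoeff2 (h : ℂ → ℂ) : ℂ := iteratedDeriv 2 h 0 / 4

/-- The second Taylor coefficient `a₂` of `f`. -/
noncomputable def coeff2 (f : ℂ → ℂ) : ℂ := iteratedDeriv 2 f 0 / 2

/-- The third Taylor coefficient `a₃` of `f`. -/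
noncomputable def coeff3 (f : ℂ → ℂ) : ℂ := iteratedDeriv 3 f 0 / 6


open ComplexConjugate Filter Topology Set

theorem iteratedDeriv_succ_id_mul_zero {𝕜 : Type*} [NontriviallyNormedField 𝕜] {F : 𝕜 → 𝕜}
    {n : ℕ} (hF : ContDiffAt 𝕜 (n + 1 : ℕ) F 0) :
    iteratedDeriv (n + 1) (fun z => z * F z) 0 = (n + 1) * iteratedDeriv n F 0 := by
  rw [iteratedDeriv_fun_mul (f := fun z => z) contDiffAt_id hF, Finset.sum_eq_single 1]
  · simp
  · intro i _ hi
    simp [iteratedDeriv_fun_id_zero, hi]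
  · simp

theorem iteratedDeriv_two_cexp {F : ℂ → ℂ} {z : ℂ} (hF : AnalyticAt ℂ F z) :
    iteratedDeriv 2 (fun w => cexp (F w)) z =
      cexp (F z) * (iteratedDeriv 2 F z + deriv F z ^ 2) := by
  have hderiv : deriv (fun w => cexp (F w)) =ᶠ[𝓝 z] fun w => cexp (F w) * deriv F w :=
    hF.eventually_analyticAt.mono fun w hw => deriv_cexp hw.differentiableAt
  rw [iteratedDeriv_succ', iteratedDeriv_one, hderiv.deriv_eq, iteratedDeriv_succ',
    iteratedDeriv_one, deriv_fun_mul (hF.differentiableAt.cexp) hF.deriv.differentiableAt,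
    deriv_cexp hF.differentiableAt]
  ring

theorem sq_norm_one_sub_conj_mul_sub_sq_norm_sub (b w : ℂ) :
    ‖1 - conj b * w‖ ^ 2 - ‖w - b‖ ^ 2 = (1 - ‖b‖ ^ 2) * (1 - ‖w‖ ^ 2) := by
  simp only [Complex.sq_norm, normSq_apply, sub_re, sub_im, mul_re, mul_im, one_re, one_im,
    conj_re, conj_im]
  ring

theorem norm_sub_le_norm_one_sub_conj_mul {b w : ℂ} (hb : ‖b‖ ≤ 1) (hw : ‖w‖ ≤ 1) :
    ‖w - b‖ ≤ ‖1 - conj b * w‖ := by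
  have key := sq_norm_one_sub_conj_mul_sub_sq_norm_sub b w
  refine le_of_sq_le_sq ?_ (norm_nonneg _)
  nlinarith [mul_nonneg (sub_nonneg.2 (pow_le_one₀ (n := 2) (norm_nonneg b) hb))
    (sub_nonneg.2 (pow_le_one₀ (n := 2) (norm_nonneg w) hw))]

theorem norm_sub_one_lt_norm_add_one {p : ℂ} (hp : 0 < p.re) : ‖p - 1‖ < ‖p + 1‖ := by
  refine lt_of_pow_lt_pow_left₀ 2 (norm_nonneg _) ?_
  simp only [Complex.sq_norm, normSq_apply, sub_re, sub_im, add_re, add_im, one_re, one_im]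
  nlinarith

theorem norm_deriv_le_one_sub_sq_of_mapsTo {g : ℂ → ℂ} (hg : DifferentiableOn ℂ g (ball 0 1))
    (hmaps : MapsTo g (ball 0 1) (closedBall 0 1)) :
    ‖deriv g 0‖ ≤ 1 - ‖g 0‖ ^ 2 := by
  have h0 : (0 : ℂ) ∈ ball 0 1 := mem_ball_self one_pos
  have hball : ball (0 : ℂ) 1 ∈ 𝓝 0 := ball_mem_nhds 0 one_pos
  set b := g 0
  have hg1 : ∀ z ∈ ball (0 : ℂ) 1, ‖g z‖ ≤ 1 := fun z hz => by simpa using hmaps hz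
  rcases (hg1 0 h0).eq_or_lt with hb1 | hb1
  · have hconst : EqOn g (fun _ => b) (ball 0 1) :=
      eqOn_of_isPreconnected_of_isMaxOn_norm (convex_ball 0 1).isPreconnected isOpen_ball hg h0
        fun z hz => (hg1 z hz).trans hb1.ge
    rw [(hconst.eventuallyEq_of_mem hball).deriv_eq, deriv_const, hb1]
    norm_num
  have hden : ∀ z ∈ ball (0 : ℂ) 1, 1 - conj b * g z ≠ 0 := by
    intro z hz hzero
    have : ‖conj b * g z‖ < 1 := by
      rw [norm_mul, norm_conj]
      nlinarith [norm_nonneg b, norm_nonneg (g z), hg1 z hz]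
    rw [← sub_eq_zero.1 hzero, norm_one] at this
    exact this.false
  -- Schwarz's lemma for `g` composed with the disk automorphism sending `b` to `0`.
  set G : ℂ → ℂ := fun z => (g z - b) / (1 - conj b * g z)
  have hGd : DifferentiableOn ℂ G (ball 0 1) :=
    (hg.sub_const b).div ((differentiableOn_const 1).sub (hg.const_mul _)) hden
  have hGmaps : MapsTo G (ball 0 1) (closedBall (G 0) 1) := by
    intro z hz
    rw [mem_closedBall, dist_eq_norm]
    simp only [G, b, sub_self, zero_div, sub_zero, norm_div]
    exact div_le_one_of_le₀ (norm_sub_le_norm_one_sub_conj_mul (hg1 0 h0) (hg1 z hz))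
      (norm_nonneg _)
  have hG' : ‖deriv G 0‖ ≤ 1 := norm_deriv_le_one_of_mapsTo_ball hGd hGmaps one_pos
  have hgG : (fun z => g z - b) =ᶠ[𝓝 0] fun z => G z * (1 - conj b * g z) :=
    eventually_of_mem hball fun z hz => (div_mul_cancel₀ _ (hden z hz)).symm
  have hderiv : deriv g 0 = deriv G 0 * (1 - ‖b‖ ^ 2 : ℝ) := by
    have hprod : HasDerivAt (fun z => G z * (1 - conj b * g z))
        (deriv G 0 * (1 - conj b * g 0) + G 0 * -(conj b * deriv g 0)) 0 :=
      (hGd.differentiableAt hball).hasDerivAt.mul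
        (((hg.differentiableAt hball).hasDerivAt.const_mul _).const_sub 1)
    rw [← deriv_sub_const b, hgG.deriv_eq, hprod.deriv]
    simp [G, b, conj_mul']
  rw [hderiv, norm_mul, norm_real, Real.norm_of_nonneg (by nlinarith [norm_nonneg b])]
  exact mul_le_of_le_one_left (by nlinarith [norm_nonneg b]) hG'

theorem norm_iteratedDeriv_two_sub_sq_le_of_re_pos {p : ℂ → ℂ}
    (hp : DifferentiableOn ℂ p (ball 0 1)) (hp0 : p 0 = 1)
    (hre : ∀ z ∈ ball (0 : ℂ) 1, 0 < (p z).re) :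
    ‖iteratedDeriv 2 p 0 / 2 - deriv p 0 ^ 2 / 2‖ ≤ 2 - ‖deriv p 0‖ ^ 2 / 2 := by
  have hball : ball (0 : ℂ) 1 ∈ 𝓝 0 := ball_mem_nhds 0 one_pos
  have hne : ∀ z ∈ ball (0 : ℂ) 1, p z + 1 ≠ 0 := fun z hz hzero =>
    absurd (hre z hz) (by simp [eq_neg_of_add_eq_zero_left hzero])
  set ω : ℂ → ℂ := fun z => (p z - 1) / (p z + 1)
  have hωd : DifferentiableOn ℂ ω (ball 0 1) := (hp.sub_const 1).div (hp.add_const 1) hne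
  have hω0 : ω 0 = 0 := by simp [ω, hp0]
  have hωmaps : MapsTo ω (ball 0 1) (closedBall (ω 0) 1) := fun z hz => by
    rw [hω0, mem_closedBall_zero_iff, norm_div]
    exact div_le_one_of_le₀ (norm_sub_one_lt_norm_add_one (hre z hz)).le (norm_nonneg _)
  set g := dslope ω 0
  have hgd : DifferentiableOn ℂ g (ball 0 1) := (differentiableOn_dslope hball).2 hωd
  have hgmaps : MapsTo g (ball 0 1) (closedBall 0 1) := fun z hz => by
    simpa using norm_dslope_le_div_of_mapsTo_ball hωd hωmaps hz
  have hpg : p =ᶠ[𝓝 0] fun z => 1 + z * (g z * (p z + 1)) :=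
    eventually_of_mem hball fun z hz => by
      show p z = 1 + z * (g z * (p z + 1))
      have hωg : z * g z = ω z := by simpa [hω0] using sub_smul_dslope ω 0 z
      rw [← mul_assoc, hωg, div_mul_cancel₀ _ (hne z hz), add_sub_cancel]
  have hF : AnalyticAt ℂ (fun z => g z * (p z + 1)) 0 :=
    (hgd.analyticAt hball).mul ((hp.analyticAt hball).add analyticAt_const)
  have hp1 : deriv p 0 = 2 * g 0 := by
    have := (hpg.iteratedDeriv_eq 1).trans ((iteratedDeriv_const_add one_pos _).trans
      (iteratedDeriv_succ_id_mul_zero (n := 0) hF.contDiffAt))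
    rw [← iteratedDeriv_one, this, iteratedDeriv_zero, hp0]
    ring
  have hp2 : iteratedDeriv 2 p 0 = 4 * deriv g 0 + 2 * g 0 * deriv p 0 := by
    have := (hpg.iteratedDeriv_eq 2).trans ((iteratedDeriv_const_add two_pos _).trans
      (iteratedDeriv_succ_id_mul_zero (n := 1) hF.contDiffAt))
    rw [iteratedDeriv_one, deriv_fun_mul (hgd.differentiableAt hball)
        ((hp.differentiableAt hball).add_const 1), deriv_add_const, hp0] at this
    rw [this]
    ring
  have hSP := norm_deriv_le_one_sub_sq_of_mapsTo hgd hgmaps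
  have hg0 : g 0 = deriv p 0 / 2 := by rw [hp1]; ring
  have hdg0 : iteratedDeriv 2 p 0 / 2 - deriv p 0 ^ 2 / 2 = 2 * deriv g 0 := by
    rw [hp2, hg0]; ring
  rw [hg0, norm_div, div_pow, Complex.norm_two] at hSP
  rw [hdg0, norm_mul, Complex.norm_two]
  linarith

noncomputable def bazilevicFunction (α : ℝ) (f h : ℂ → ℂ) : ℂ → ℂ :=
  fun z => cexp ((α - 1 : ℂ) * h z) * deriv f z

namespace BazilevicB1

variable {α : ℝ} {f h : ℂ → ℂ}

theorem eventuallyEq_mul_cexp (hf : BazilevicB1 α f h) : f =ᶠ[𝓝 0] fun z => z * cexp (h z) :=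
  have ⟨_, _, _, _, _, hfe, _⟩ := hf
  eventually_of_mem (ball_mem_nhds 0 one_pos) hfe

theorem analyticAt_zero (hf : BazilevicB1 α f h) : AnalyticAt ℂ h 0 :=
  have ⟨_, hha, _, _, _, _, _⟩ := hf
  hha 0 (mem_ball_self one_pos)

theorem coeff2_eq (hf : BazilevicB1 α f h) : coeff2 f = deriv h 0 := by
  have ⟨_, _, _, _, hh0, _, _⟩ := hf
  have hE := hf.analyticAt_zero.cexp'
  rw [coeff2, hf.eventuallyEq_mul_cexp.iteratedDeriv_eq,
    iteratedDeriv_succ_id_mul_zero (n := 1) hE.contDiffAt, iteratedDeriv_one,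
    deriv_cexp hf.analyticAt_zero.differentiableAt, hh0]
  norm_num

theorem coeff3_eq (hf : BazilevicB1 α f h) :
    coeff3 f = (iteratedDeriv 2 h 0 + deriv h 0 ^ 2) / 2 := by
  have ⟨_, _, _, _, hh0, _, _⟩ := hf
  have hE := hf.analyticAt_zero.cexp'
  rw [coeff3, hf.eventuallyEq_mul_cexp.iteratedDeriv_eq,
    iteratedDeriv_succ_id_mul_zero (n := 2) hE.contDiffAt,
    iteratedDeriv_two_cexp hf.analyticAt_zero, hh0]
  norm_num
  ring

theorem differentiableOn_bazilevicFunction (hf : BazilevicB1 α f h) :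
    DifferentiableOn ℂ (bazilevicFunction α f h) (ball 0 1) :=
  have ⟨hfa, hha, _, _, _, _, _⟩ := hf
  ((analyticOnNhd_const.mul hha).cexp.mul hfa.deriv).differentiableOn

theorem bazilevicFunction_zero (hf : BazilevicB1 α f h) : bazilevicFunction α f h 0 = 1 := by
  have ⟨_, _, _, hdf0, hh0, _, _⟩ := hf
  simp [bazilevicFunction, hdf0, hh0]

theorem deriv_bazilevicFunction (hf : BazilevicB1 α f h) :
    deriv (bazilevicFunction α f h) 0 = (α + 1) * coeff2 f := by
  have ⟨hfa, _, _, hdf0, hh0, _, _⟩ := hf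
  have hP : AnalyticAt ℂ (fun z => (α - 1 : ℂ) * h z) 0 :=
    analyticAt_const.mul hf.analyticAt_zero
  have hf'' : deriv (deriv f) 0 = 2 * coeff2 f := by
    rw [coeff2, ← iteratedDeriv_one, ← iteratedDeriv_succ']
    ring
  unfold bazilevicFunction
  rw [deriv_fun_mul hP.cexp'.differentiableAt
    (hfa.deriv 0 (mem_ball_self one_pos)).differentiableAt, deriv_cexp hP.differentiableAt,
    deriv_const_mul_field', hf'', hdf0, hh0, mul_zero, Complex.exp_zero, hf.coeff2_eq]
  ring

theorem iteratedDeriv_two_bazilevicFunction (hf : BazilevicB1 α f h) :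
    iteratedDeriv 2 (bazilevicFunction α f h) 0 =
      (2 * α + 4) * coeff3 f + (α ^ 2 + α - 2) * coeff2 f ^ 2 := by
  have ⟨hfa, _, _, hdf0, hh0, _, _⟩ := hf
  have hP : AnalyticAt ℂ (fun z => (α - 1 : ℂ) * h z) 0 :=
    analyticAt_const.mul hf.analyticAt_zero
  have hf' : AnalyticAt ℂ (deriv f) 0 := hfa.deriv 0 (mem_ball_self one_pos)
  have hf'' : ∀ n, iteratedDeriv n (deriv f) 0 = iteratedDeriv (n + 1) f 0 := fun n => by
    rw [iteratedDeriv_succ']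
  have h2 : iteratedDeriv 2 f 0 = 2 * coeff2 f := by rw [coeff2]; ring
  have h3 : iteratedDeriv 3 f 0 = 6 * coeff3 f := by rw [coeff3]; ring
  have hB : iteratedDeriv 2 h 0 = 2 * coeff3 f - coeff2 f ^ 2 := by
    rw [hf.coeff3_eq, hf.coeff2_eq]; ring
  unfold bazilevicFunction
  rw [iteratedDeriv_fun_mul hP.cexp'.contDiffAt hf'.contDiffAt]
  simp only [Finset.sum_range_succ, Finset.sum_range_zero, hf'', iteratedDeriv_zero,
    iteratedDeriv_one, iteratedDeriv_two_cexp hP, deriv_cexp hP.differentiableAt,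
    iteratedDeriv_const_mul_field, deriv_const_mul_field']
  norm_num [h2, h3, hB, ← hf.coeff2_eq, hdf0, hh0]
  ring

end BazilevicB1

/-- For `α > 0` and `f ∈ B₁(α)`:
`|a₃ - ((α+3)/(2(α+2))) a₂²| ≤ 2/(α+2) - ((α+1)²/(2(α+2))) |a₂|²`. -/
theorem stmt_6 (α : ℝ) (hα : 0 < α) (f h : ℂ → ℂ) (hf : BazilevicB1 α f h) :
    ‖coeff3 f - ((α + 3 : ℂ) / (2 * (α + 2))) * (coeff2 f) ^ 2‖ ≤
      2 / (α + 2) - ((α + 1) ^ 2 / (2 * (α + 2))) * ‖coeff2 f‖ ^ 2 := by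
  have ⟨_, _, _, _, _, _, hre⟩ := hf
  have hcar := norm_iteratedDeriv_two_sub_sq_le_of_re_pos hf.differentiableOn_bazilevicFunction
    hf.bazilevicFunction_zero hre
  rw [hf.iteratedDeriv_two_bazilevicFunction, hf.deriv_bazilevicFunction] at hcar
  have hα2 : 0 < α + 2 := by linarith
  have hα2' : (α + 2 : ℂ) ≠ 0 := by exact_mod_cast hα2.ne'
  have hfactor : ((2 * α + 4) * coeff3 f + (α ^ 2 + α - 2) * coeff2 f ^ 2) / 2 -
      ((α + 1) * coeff2 f) ^ 2 / 2 =
      (α + 2 : ℂ) * (coeff3 f - ((α + 3 : ℂ) / (2 * (α + 2))) * coeff2 f ^ 2) := by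
    field_simp
    ring
  have hnorm2 : ‖(α + 2 : ℂ)‖ = α + 2 := by exact_mod_cast Complex.norm_of_nonneg hα2.le
  have hnorm1 : ‖(α + 1 : ℂ)‖ ^ 2 = (α + 1) ^ 2 := by
    norm_cast
    rw [Real.norm_eq_abs, sq_abs]
  rw [hfactor, norm_mul, norm_mul, mul_pow, hnorm2, hnorm1] at hcar
  calc _ ≤ (2 - (α + 1) ^ 2 * ‖coeff2 f‖ ^ 2 / 2) / (α + 2) := by
        rwa [le_div_iff₀ hα2, mul_comm]
    _ = _ := by field_simp
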